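/- arXiv:2401.03292 — 5 statements merged into one kernel-verified Lean document; each statement's English description precedes it below -/
import Mathlib

section
/- For every integer n ≥ 1, the 2-rank of the special orthogonal group SO(n) equals n − 1. -/
/-!
An elementary abelian 2-subgroup of `SO(n)` consists of commuting orthogonal involutions, which are
symmetric and hence simultaneously diagonalisable. In a common eigenbasis every element acts by a
vector of signs `±1` with product `det = 1`; such a vector is determined by all but one of its
entries, so the subgroup has order at most `2 ^ (n - 1)`. Conversely, the diagonal sign matrices of
determinant `1` form a copy of `(ZMod 2) ^ (n - 1)` inside `SO(n)`.
-/

/-- The Borel–Serre 2-rank `r₂(G)`: the supremum of those `k` such that `(ZMod 2)^k`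
embeds into `G` by an injective group homomorphism. -/
noncomputable def twoRank (G : Type*) [Group G] : ℕ :=
  sSup {k : ℕ | ∃ f : Multiplicative (Fin k → ZMod 2) →* G, Function.Injective f}

/-- `SO(n)`: the subgroup of the orthogonal group `O(n)` of matrices with determinant 1. -/
def SO (n : ℕ) : Subgroup (Matrix.orthogonalGroup (Fin n) ℝ) where
  carrier := {A | Matrix.det (A : Matrix (Fin n) (Fin n) ℝ) = 1}
  one_mem' := by simp
  mul_mem' := by
    intro A B hA hB
    simp only [Set.mem_setOf_eq, Submonoid.coe_mul, Matrix.det_mul] at *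
    rw [hA, hB, one_mul]
  inv_mem' := by
    intro A hA
    have h : ((A⁻¹ : Matrix.orthogonalGroup (Fin n) ℝ) : Matrix (Fin n) (Fin n) ℝ)
        = star (A : Matrix (Fin n) (Fin n) ℝ) := by
      rw [← Unitary.star_eq_inv, Unitary.coe_star]
    simp only [Set.mem_setOf_eq] at *
    rw [h, Matrix.star_eq_conjTranspose, Matrix.det_conjTranspose, hA, star_one]

open Matrix Module Module.End Function

theorem LinearMap.det_eq_prod_of_apply_basis_eq_smul {R M ι : Type*} [CommRing R]
    [AddCommGroup M] [Module R M] [Fintype ι] [DecidableEq ι] (b : Basis ι R M)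
    {f : M →ₗ[R] M} {w : ι → R} (hf : ∀ j, f (b j) = w j • b j) :
    LinearMap.det f = ∏ j, w j := by
  have hdiag : LinearMap.toMatrix b b f = diagonal w := by
    ext i j
    rcases eq_or_ne i j with rfl | hij
    · simp [LinearMap.toMatrix_apply, hf]
    · simp [LinearMap.toMatrix_apply, hf, hij]
  rw [← LinearMap.det_toMatrix b, hdiag, det_diagonal]

theorem Module.End.eq_one_or_eq_neg_one_of_mul_self_eq_one {K V : Type*} [Field K]
    [AddCommGroup V] [Module K V] {f : Module.End K V} (hf : f * f = 1) {v : V} (hv : v ≠ 0)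
    {c : K} (hfv : f v = c • v) : c = 1 ∨ c = -1 := by
  have hcc : (c * c - 1) • v = 0 := by
    rw [sub_smul, one_smul, ← smul_smul, ← hfv, ← map_smul, ← hfv, ← Module.End.mul_apply, hf,
      Module.End.one_apply, sub_self]
  exact mul_self_eq_one_iff.mp (sub_eq_zero.mp ((smul_eq_zero.mp hcc).resolve_right hv))

theorem Matrix.isHermitian_of_mem_orthogonalGroup_of_mul_self_eq_one {n R : Type*} [Fintype n]
    [DecidableEq n] [CommRing R] [StarRing R] [TrivialStar R] {A : Matrix n n R}
    (hA : A ∈ orthogonalGroup n R) (hA2 : A * A = 1) : A.IsHermitian :=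
  isHermitian_iff_isSymm.mpr (left_inv_eq_right_inv ((mem_orthogonalGroup_iff' n R).mp hA) hA2)

theorem Matrix.diagonal_mem_orthogonalGroup {n R : Type*} [Fintype n] [DecidableEq n] [CommRing R]
    {d : n → R} (hd : d * d = 1) : diagonal d ∈ orthogonalGroup n R := by
  rw [mem_orthogonalGroup_iff, diagonal_transpose, diagonal_mul_diagonal]
  exact (congrArg diagonal hd).trans diagonal_one

theorem LinearMap.IsSymmetric.exists_basis_apply_eq_smul_of_commute {𝕜 E ι : Type*} [RCLike 𝕜]
    [NormedAddCommGroup E] [InnerProductSpace 𝕜 E] [FiniteDimensional 𝕜 E] {n : ℕ}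
    (hn : finrank 𝕜 E = n) {T : ι → E →ₗ[𝕜] E} (hT : ∀ i, (T i).IsSymmetric)
    (hC : Pairwise (Commute on T)) :
    ∃ (b : Basis (Fin n) 𝕜 E) (w : ι → Fin n → 𝕜), ∀ i j, T i (b j) = w i j • b j := by
  classical
  have hint := directSum_isInternal_of_pairwise_commute hT hC
  let b₀ := hint.collectedBasis fun χ => finBasis 𝕜 _
  let e := b₀.indexEquiv ((finBasis 𝕜 E).reindex (finCongr hn))
  refine ⟨b₀.reindex e, fun i j => (e.symm j).1 i, fun i j => ?_⟩
  rw [Basis.reindex_apply]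
  exact mem_eigenspace_iff.mp ((Submodule.mem_iInf _).mp (hint.collectedBasis_mem _ _) i)

theorem natCard_le_of_injective_signs {G : Type*} {m : ℕ} (w : G → Fin (m + 1) → ℝ)
    (hw : Injective w) (hsign : ∀ g i, w g i = 1 ∨ w g i = -1)
    (hprod : ∀ g, ∏ i, w g i = 1) : Nat.card G ≤ 2 ^ m := by
  have hhead (g : G) : w g 0 = (∏ i : Fin m, w g i.succ)⁻¹ :=
    eq_inv_of_mul_eq_one_left (by rw [← Fin.prod_univ_succ, hprod])
  let S := Fintype.piFinset fun _ : Fin m => ({1, -1} : Finset ℝ)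
  let tail (g : G) : S := ⟨fun i => w g i.succ, by simp [S, hsign]⟩
  have htail : Injective tail := by
    intro g h hgh
    have heq (i : Fin m) : w g i.succ = w h i.succ := congrFun (congrArg Subtype.val hgh) i
    refine hw (funext fun i => ?_)
    cases i using Fin.cases with
    | zero => simp only [hhead, heq]
    | succ i => exact heq i
  calc Nat.card G ≤ Nat.card S := Nat.card_le_card_of_injective tail htail
    _ = 2 ^ m := by
      rw [Nat.card_eq_fintype_card, Fintype.card_coe, Fintype.card_piFinset,
        Finset.card_pair (by norm_num)]
      simp

theorem natCard_le_of_injective_SO {G : Type*} [CommGroup G] (hG : ∀ g : G, g * g = 1) {m : ℕ}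
    (ρ : G →* SO (m + 1)) (hρ : Injective ρ) : Nat.card G ≤ 2 ^ m := by
  let A : G →* Matrix (Fin (m + 1)) (Fin (m + 1)) ℝ :=
    (orthogonalGroup (Fin (m + 1)) ℝ).subtype.comp ((SO (m + 1)).subtype.comp ρ)
  let T : G →* Module.End ℝ (EuclideanSpace ℝ (Fin (m + 1))) :=
    (toLpLinAlgEquiv 2 : Matrix _ _ ℝ ≃ₐ[ℝ] _).toMonoidHom.comp A
  have hA_inj : Injective A := Subtype.val_injective.comp (Subtype.val_injective.comp hρ)
  have hT_inj : Injective T := (toLpLinAlgEquiv 2).injective.comp hA_inj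
  have hT_sq (g : G) : T g * T g = 1 := by rw [← map_mul, hG, map_one]
  have hT_sym (g : G) : (T g).IsSymmetric := by
    refine isSymmetric_toEuclideanLin_iff.mpr
      (isHermitian_of_mem_orthogonalGroup_of_mul_self_eq_one (ρ g).1.2 ?_)
    rw [← map_mul A, hG, map_one]
  have hT_comm : Pairwise (Commute on T) := fun g h _ => (Commute.all g h).map T
  obtain ⟨b, w, hw⟩ :=
    LinearMap.IsSymmetric.exists_basis_apply_eq_smul_of_commute finrank_euclideanSpace_fin
      hT_sym hT_comm
  refine natCard_le_of_injective_signs w (fun g h hgh => hT_inj (b.ext fun j => ?_))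
    (fun g j => eq_one_or_eq_neg_one_of_mul_self_eq_one (hT_sq g) (b.ne_zero j) (hw g j))
    (fun g => ?_)
  · rw [hw, hw, hgh]
  · rw [← LinearMap.det_eq_prod_of_apply_basis_eq_smul b (hw g)]
    exact (LinearMap.det_toLpLin 2 (A g)).trans (ρ g).2

def zmodTwoSign (a : ZMod 2) : ℝ := (-1) ^ a.val

theorem zmodTwoSign_add (a b : ZMod 2) : zmodTwoSign (a + b) = zmodTwoSign a * zmodTwoSign b := by
  rw [zmodTwoSign, ZMod.val_add, ← neg_one_pow_eq_pow_mod_two, pow_add, zmodTwoSign, zmodTwoSign]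

theorem zmodTwoSign_mul_self (a : ZMod 2) : zmodTwoSign a * zmodTwoSign a = 1 := by
  rw [← zmodTwoSign_add, CharTwo.add_self_eq_zero, zmodTwoSign, ZMod.val_zero, pow_zero]

theorem zmodTwoSign_injective : Injective zmodTwoSign := by
  intro a b hab
  fin_cases a <;> fin_cases b <;> first | rfl | norm_num [zmodTwoSign, ZMod.val] at hab

def signVector {m : ℕ} (x : Fin m → ZMod 2) : Fin (m + 1) → ℝ :=
  Fin.cons (∏ j, zmodTwoSign (x j)) fun j => zmodTwoSign (x j)

theorem signVector_zero (m : ℕ) : signVector (0 : Fin m → ZMod 2) = 1 := by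
  ext i
  cases i using Fin.cases <;> simp [signVector, zmodTwoSign]

theorem signVector_add {m : ℕ} (x y : Fin m → ZMod 2) :
    signVector (x + y) = signVector x * signVector y := by
  ext i
  cases i using Fin.cases <;> simp [signVector, zmodTwoSign_add, Finset.prod_mul_distrib]

theorem signVector_mul_self {m : ℕ} (x : Fin m → ZMod 2) : signVector x * signVector x = 1 := by
  ext i
  cases i using Fin.cases <;>
    simp [signVector, ← Finset.prod_mul_distrib, zmodTwoSign_mul_self]

theorem prod_signVector {m : ℕ} (x : Fin m → ZMod 2) : ∏ i, signVector x i = 1 := by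
  simp [Fin.prod_univ_succ, signVector, ← Finset.prod_mul_distrib, zmodTwoSign_mul_self]

theorem signVector_injective (m : ℕ) : Injective (signVector (m := m)) :=
  fun _ _ h => funext fun j => zmodTwoSign_injective (congrFun h j.succ)

def signDiagonal (m : ℕ) : Multiplicative (Fin m → ZMod 2) →* SO (m + 1) where
  toFun x := ⟨⟨diagonal (signVector x.toAdd), diagonal_mem_orthogonalGroup (signVector_mul_self _)⟩,
    det_diagonal.trans (prod_signVector _)⟩
  map_one' := by ext : 2; simp [signVector_zero]
  map_mul' x y := Subtype.ext <| Subtype.ext <|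
    (congrArg diagonal (signVector_add x.toAdd y.toAdd)).trans (diagonal_mul_diagonal' _ _).symm

theorem signDiagonal_injective (m : ℕ) : Injective (signDiagonal m) :=
  fun _ _ h => signVector_injective m (diagonal_injective (congrArg (fun A => A.1.1) h))

theorem twoRank_eq {G : Type*} [Group G] {r : ℕ}
    (hr : ∃ f : Multiplicative (Fin r → ZMod 2) →* G, Injective f)
    (hle : ∀ k (f : Multiplicative (Fin k → ZMod 2) →* G), Injective f → k ≤ r) :
    twoRank G = r :=
  IsGreatest.csSup_eq ⟨hr, fun k ⟨f, hf⟩ => hle k f hf⟩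

/-- Chen–Nagano: the 2-rank of `SO(n)` is `n - 1`. -/
theorem twoRank_SO (n : ℕ) (hn : 1 ≤ n) : twoRank (SO n) = n - 1 := by
  obtain ⟨m, rfl⟩ := Nat.exists_eq_add_of_le' hn
  rw [Nat.add_sub_cancel]
  refine twoRank_eq ⟨signDiagonal m, signDiagonal_injective m⟩ fun k f hf => ?_
  have hsq (x : Multiplicative (Fin k → ZMod 2)) : x * x = 1 :=
    funext fun i => CharTwo.add_self_eq_zero (x.toAdd i)
  have hcard := natCard_le_of_injective_SO hsq f hf
  rw [Nat.card_eq_fintype_card, Fintype.card_multiplicative, Fintype.card_fun, ZMod.card,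
    Fintype.card_fin] at hcard
  exact (Nat.pow_le_pow_iff_right one_lt_two).mp hcard
end

section
/- Let n ≥ 1 and let Sⁿ be the unit sphere in the Euclidean space ℝ^{n+1}. If A is a subset of Sⁿ such that 2⟨x, y⟩·x − y = y for all x, y ∈ A (i.e., every point of A is fixed by the geodesic symmetry of Sⁿ at every point of A), then A has at most 2 elements; moreover, for every x ∈ Sⁿ the pair {x, −x} is such a subset with exactly 2 elements. Consequently the 2-number of the n-sphere is #₂Sⁿ = 2. -/
/-! A point `y` is fixed by the geodesic symmetry at `x` exactly when `y = ⟪x, y⟫ • x`; for unit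
vectors this forces `⟪x, y⟫ = ±1`, i.e. `y = ±x`. Hence an antipodal subset of the sphere lies
in `{x, -x}` for any of its points `x`. -/

open scoped RealInnerProductSpace

/-- The 2-number of the unit sphere `Sⁿ ⊆ ℝ^(n+1)`: the supremum of the cardinalities of
subsets `A` of the sphere such that the geodesic symmetry `y ↦ 2⟪x,y⟫ • x - y` at any
`x ∈ A` fixes every point of `A`. -/
noncomputable def sphereTwoNumber (n : ℕ) : ℕ∞ :=
  ⨆ (A : Set (EuclideanSpace ℝ (Fin (n + 1))))
    (_ : A ⊆ Metric.sphere 0 1)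
    (_ : ∀ x ∈ A, ∀ y ∈ A, (2 * ⟪x, y⟫) • x - y = y), A.encard

section InnerProductSpace

variable {E : Type*} [NormedAddCommGroup E] [InnerProductSpace ℝ E]

theorem two_inner_smul_sub_eq_self_iff {x y : E} :
    (2 * ⟪x, y⟫) • x - y = y ↔ ⟪x, y⟫ • x = y := by
  rw [sub_eq_iff_eq_add, ← two_smul ℝ y, mul_smul]
  exact smul_right_inj two_ne_zero

theorem eq_or_eq_neg_of_inner_smul_eq {x y : E} (hx : ‖x‖ = 1) (hy : ‖y‖ = 1)
    (h : ⟪x, y⟫ • x = y) : y = x ∨ y = -x := by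
  have habs : |⟪x, y⟫| = 1 := by
    simpa [norm_smul, hx, hy] using congrArg norm h
  rcases abs_eq zero_le_one |>.mp habs with hxy | hxy
  · left; rw [← h, hxy, one_smul]
  · right; rw [← h, hxy, neg_one_smul]

theorem subset_pair_neg_of_forall_symm_eq {A : Set E} (hA : A ⊆ Metric.sphere 0 1)
    (hsymm : ∀ x ∈ A, ∀ y ∈ A, (2 * ⟪x, y⟫) • x - y = y) {x : E} (hx : x ∈ A) :
    A ⊆ {x, -x} := fun y hy =>
  eq_or_eq_neg_of_inner_smul_eq (mem_sphere_zero_iff_norm.mp (hA hx))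
    (mem_sphere_zero_iff_norm.mp (hA hy)) (two_inner_smul_sub_eq_self_iff.mp (hsymm x hx y hy))

theorem encard_le_two_of_forall_symm_eq {A : Set E} (hA : A ⊆ Metric.sphere 0 1)
    (hsymm : ∀ x ∈ A, ∀ y ∈ A, (2 * ⟪x, y⟫) • x - y = y) : A.encard ≤ 2 := by
  rcases A.eq_empty_or_nonempty with rfl | ⟨x, hx⟩
  · simp
  calc A.encard ≤ ({x, -x} : Set E).encard :=
        Set.encard_le_encard (subset_pair_neg_of_forall_symm_eq hA hsymm hx)
    _ ≤ 2 := by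
        grw [Set.encard_insert_le, Set.encard_singleton]
        rfl

theorem forall_pair_neg_symm_eq {x : E} (hx : ‖x‖ = 1) :
    ∀ a ∈ ({x, -x} : Set E), ∀ b ∈ ({x, -x} : Set E), (2 * ⟪a, b⟫) • a - b = b := by
  simp only [Set.mem_insert_iff, Set.mem_singleton_iff, two_inner_smul_sub_eq_self_iff]
  rintro a (rfl | rfl) b (rfl | rfl) <;> simp [hx]

end InnerProductSpace

theorem pair_neg_subset_sphere {G : Type*} [SeminormedAddGroup G] {x : G} (hx : ‖x‖ = 1) :
    ({x, -x} : Set G) ⊆ Metric.sphere 0 1 := by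
  simp [Set.insert_subset_iff, hx]

theorem encard_pair_neg {V : Type*} [AddCommGroup V] [Module ℝ V] {x : V} (hx : x ≠ 0) :
    ({x, -x} : Set V).encard = 2 :=
  Set.encard_pair fun h => hx <| by
    rwa [eq_neg_iff_add_eq_zero, ← two_smul ℝ, smul_eq_zero_iff_right two_ne_zero] at h

theorem sphereTwoNumber_eq_two_general (n : ℕ) :
    (∀ A : Set (EuclideanSpace ℝ (Fin (n + 1))), A ⊆ Metric.sphere 0 1 →
      (∀ x ∈ A, ∀ y ∈ A, (2 * ⟪x, y⟫) • x - y = y) → A.encard ≤ 2) ∧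
    (∀ x : EuclideanSpace ℝ (Fin (n + 1)), x ∈ Metric.sphere (0 : EuclideanSpace ℝ (Fin (n + 1))) 1 →
      ({x, -x} : Set (EuclideanSpace ℝ (Fin (n + 1)))) ⊆ Metric.sphere 0 1 ∧
      (∀ a ∈ ({x, -x} : Set (EuclideanSpace ℝ (Fin (n + 1)))),
        ∀ b ∈ ({x, -x} : Set (EuclideanSpace ℝ (Fin (n + 1)))), (2 * ⟪a, b⟫) • a - b = b) ∧
      ({x, -x} : Set (EuclideanSpace ℝ (Fin (n + 1)))).encard = 2) ∧
    sphereTwoNumber n = 2 := by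
  refine ⟨fun A => encard_le_two_of_forall_symm_eq, fun x hx => ?_, le_antisymm ?_ ?_⟩
  · have hx_norm := mem_sphere_zero_iff_norm.mp hx
    exact ⟨pair_neg_subset_sphere hx_norm, forall_pair_neg_symm_eq hx_norm,
      encard_pair_neg (ne_zero_of_mem_unit_sphere ⟨x, hx⟩)⟩
  · exact iSup_le fun A => iSup₂_le fun hA hsymm => encard_le_two_of_forall_symm_eq hA hsymm
  · obtain ⟨x, hx⟩ :=
      (NormedSpace.sphere_nonempty (E := EuclideanSpace ℝ (Fin (n + 1)))).mpr zero_le_one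
    have hx_norm := mem_sphere_zero_iff_norm.mp hx
    rw [← encard_pair_neg (ne_zero_of_mem_unit_sphere ⟨x, hx⟩)]
    exact le_iSup_of_le {x, -x}
      (le_iSup₂_of_le (pair_neg_subset_sphere hx_norm) (forall_pair_neg_symm_eq hx_norm) le_rfl)

/-- Antipodal sets of the round sphere `Sⁿ` have at most 2 points, the pairs `{x, -x}`
are antipodal sets with exactly 2 points, and consequently `#₂Sⁿ = 2`. -/
theorem sphereTwoNumber_eq_two (n : ℕ) (hn : 1 ≤ n) :
    (∀ A : Set (EuclideanSpace ℝ (Fin (n + 1))), A ⊆ Metric.sphere 0 1 →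
      (∀ x ∈ A, ∀ y ∈ A, (2 * ⟪x, y⟫) • x - y = y) → A.encard ≤ 2) ∧
    (∀ x : EuclideanSpace ℝ (Fin (n + 1)), x ∈ Metric.sphere (0 : EuclideanSpace ℝ (Fin (n + 1))) 1 →
      ({x, -x} : Set (EuclideanSpace ℝ (Fin (n + 1)))) ⊆ Metric.sphere 0 1 ∧
      (∀ a ∈ ({x, -x} : Set (EuclideanSpace ℝ (Fin (n + 1)))),
        ∀ b ∈ ({x, -x} : Set (EuclideanSpace ℝ (Fin (n + 1)))), (2 * ⟪a, b⟫) • a - b = b) ∧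
      ({x, -x} : Set (EuclideanSpace ℝ (Fin (n + 1)))).encard = 2) ∧
    sphereTwoNumber n = 2 :=
  sphereTwoNumber_eq_two_general n
end

section
/- Let n ≥ 1, let Sⁿ be the unit sphere in Euclidean space ℝ^{n+1}, let o ∈ Sⁿ, and let f : Sⁿ → ℝ be a continuous function which is isotropic at o, i.e. f(g(x)) = f(x) for every x ∈ Sⁿ and every linear isometric equivalence g of ℝ^{n+1} with g(o) = o. Then f maps some great antipodal set of Sⁿ to a single point: there exists x ∈ Sⁿ with f(−x) = f(x) (the pair {x, −x} being a great antipodal set of Sⁿ, since #₂Sⁿ = 2). -/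
/-! The reflection in the hyperplane orthogonal to a unit vector `x ⊥ o` fixes `o` and sends
`x` to `-x`, so isotropy at `o` forces `f (-x) = f x`; such an `x` exists once the
dimension is at least two. -/

open Submodule RealInnerProductSpace

theorem Submodule.reflection_orthogonal_singleton_eq_self_of_inner_eq_zero
    {𝕜 E : Type*} [RCLike 𝕜] [NormedAddCommGroup E] [InnerProductSpace 𝕜 E]
    {v u : E} (h : inner 𝕜 v u = 0) : reflection (𝕜 ∙ v)ᗮ u = u :=
  reflection_mem_subspace_eq_self (mem_orthogonal_singleton_iff_inner_right.mpr h)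

theorem exists_norm_eq_one_and_inner_eq_zero {E : Type*} [NormedAddCommGroup E]
    [InnerProductSpace ℝ E] (hE : 1 < Module.finrank ℝ E) (o : E) :
    ∃ x : E, ‖x‖ = 1 ∧ ⟪x, o⟫ = 0 := by
  have : FiniteDimensional ℝ E := Module.finite_of_finrank_pos (by omega)
  have hspan : Module.finrank ℝ (ℝ ∙ o) ≤ 1 := by
    simpa using finrank_span_le_card (R := ℝ) ({o} : Set E)
  have hcompl : 0 < Module.finrank ℝ (ℝ ∙ o)ᗮ := by
    have := (ℝ ∙ o).finrank_add_finrank_orthogonal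
    omega
  obtain ⟨v, hv, hv0⟩ := exists_mem_ne_zero_of_ne_bot (Submodule.one_le_finrank_iff.mp hcompl)
  refine ⟨‖v‖⁻¹ • v, norm_smul_inv_norm hv0, ?_⟩
  rw [real_inner_smul_left, mem_orthogonal_singleton_iff_inner_left.mp hv, mul_zero]

theorem isotropic_maps_great_antipodal_set_to_point_general (n : ℕ) (hn : 1 ≤ n)
    (o : EuclideanSpace ℝ (Fin (n + 1)))
    (f : EuclideanSpace ℝ (Fin (n + 1)) → ℝ)
    (hiso : ∀ g : EuclideanSpace ℝ (Fin (n + 1)) ≃ₗᵢ[ℝ] EuclideanSpace ℝ (Fin (n + 1)),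
      g o = o → ∀ x ∈ Metric.sphere (0 : EuclideanSpace ℝ (Fin (n + 1))) 1, f (g x) = f x) :
    ∃ x ∈ Metric.sphere (0 : EuclideanSpace ℝ (Fin (n + 1))) 1, f (-x) = f x := by
  obtain ⟨x, hx, hxo⟩ :=
    exists_norm_eq_one_and_inner_eq_zero (by rw [finrank_euclideanSpace_fin]; omega) o
  have hx_sphere : x ∈ Metric.sphere (0 : EuclideanSpace ℝ (Fin (n + 1))) 1 := by simpa using hx
  refine ⟨x, hx_sphere, ?_⟩
  simpa only [reflection_orthogonalComplement_singleton_eq_neg] using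
    hiso (reflection (ℝ ∙ x)ᗮ) (reflection_orthogonal_singleton_eq_self_of_inner_eq_zero hxo)
      x hx_sphere

/-- Chen's Borsuk–Ulam type theorem for the sphere: a continuous function `f` on the unit
sphere `Sⁿ ⊆ ℝ^(n+1)` that is invariant under the isotropy group at a base point
`o ∈ Sⁿ` (all linear isometries of `ℝ^(n+1)` fixing `o`) maps some great antipodal set
`{x, -x}` of `Sⁿ` to a single point. -/
theorem isotropic_maps_great_antipodal_set_to_point (n : ℕ) (hn : 1 ≤ n)
    (o : EuclideanSpace ℝ (Fin (n + 1)))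
    (ho : o ∈ Metric.sphere (0 : EuclideanSpace ℝ (Fin (n + 1))) 1)
    (f : EuclideanSpace ℝ (Fin (n + 1)) → ℝ)
    (hf : ContinuousOn f (Metric.sphere 0 1))
    (hiso : ∀ g : EuclideanSpace ℝ (Fin (n + 1)) ≃ₗᵢ[ℝ] EuclideanSpace ℝ (Fin (n + 1)),
      g o = o → ∀ x ∈ Metric.sphere (0 : EuclideanSpace ℝ (Fin (n + 1))) 1, f (g x) = f x) :
    ∃ x ∈ Metric.sphere (0 : EuclideanSpace ℝ (Fin (n + 1))) 1, f (-x) = f x :=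
  isotropic_maps_great_antipodal_set_to_point_general n hn o f hiso
end

section
/- Let G and G'' be compact connected Lie groups and let π : G → G'' be a continuous surjective group homomorphism whose kernel has exactly 2 elements (so that π is a double covering). Then the 2-numbers satisfy #₂G ≤ 2·#₂G''. -/
/-!
Homomorphisms map antipodal sets to antipodal sets, and every fibre of `π` is a coset of its
kernel, so an antipodal set `A ⊆ G` has at most `|ker π| · |π(A)| = 2 · |π(A)|` elements.
-/

/-- A subset `A` of a group `G` is antipodal if the point symmetry `s_x : y ↦ x * y⁻¹ * x`
fixes every point of `A`, for every `x ∈ A`. -/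
def IsAntipodalSet {G : Type*} [Group G] (A : Set G) : Prop :=
  ∀ x ∈ A, ∀ y ∈ A, x * y⁻¹ * x = y

/-- The 2-number `#₂G` of a group: the supremum of the cardinalities of antipodal subsets. -/
noncomputable def twoNumber (G : Type*) [Group G] : ℕ∞ :=
  ⨆ (A : Set G) (_ : IsAntipodalSet A), A.encard

theorem IsAntipodalSet.image {G K : Type*} [Group G] [Group K] {A : Set G}
    (hA : IsAntipodalSet A) (f : G →* K) : IsAntipodalSet (f '' A) := by
  rintro _ ⟨x, hx, rfl⟩ _ ⟨y, hy, rfl⟩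
  rw [← map_inv, ← map_mul, ← map_mul, hA x hx y hy]

theorem IsAntipodalSet.encard_le_twoNumber {G : Type*} [Group G] {A : Set G}
    (hA : IsAntipodalSet A) : A.encard ≤ twoNumber G :=
  le_iSup₂ (f := fun (B : Set G) (_ : IsAntipodalSet B) => B.encard) A hA

theorem MonoidHom.encard_le_encard_ker_mul_encard_image {G K : Type*} [Group G] [Group K]
    (f : G →* K) (A : Set G) : A.encard ≤ (f.ker : Set G).encard * (f '' A).encard := by
  set s := Function.invFunOn f A
  have hA : A ⊆ (fun p : K × G => s p.1 * p.2) '' ((f '' A) ×ˢ (f.ker : Set G)) := by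
    intro x hx
    have hfx : ∃ a ∈ A, f a = f x := ⟨x, hx, rfl⟩
    refine ⟨(f x, (s (f x))⁻¹ * x), ⟨⟨x, hx, rfl⟩, ?_⟩, mul_inv_cancel_left _ _⟩
    rw [SetLike.mem_coe, f.mem_ker, map_mul, map_inv, Function.invFunOn_eq hfx, inv_mul_cancel]
  calc A.encard ≤ ((f '' A) ×ˢ (f.ker : Set G)).encard :=
        (Set.encard_le_encard hA).trans (Set.encard_image_le _ _)
    _ = (f.ker : Set G).encard * (f '' A).encard := by rw [Set.encard_prod, mul_comm]

theorem MonoidHom.twoNumber_le_encard_ker_mul {G K : Type*} [Group G] [Group K] (f : G →* K) :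
    twoNumber G ≤ (f.ker : Set G).encard * twoNumber K :=
  iSup₂_le fun A hA => (f.encard_le_encard_ker_mul_encard_image A).trans <|
    mul_le_mul_right (hA.image f).encard_le_twoNumber _

theorem twoNumber_le_two_mul_of_doubleCover_general
    (G : Type*) [Group G]
    (G'' : Type*) [Group G'']
    (π : G →* G'')
    (hker : Nat.card π.ker = 2) :
    twoNumber G ≤ 2 * twoNumber G'' := by
  have hker' : (π.ker : Set G).encard = 2 := by
    have : Finite π.ker := Nat.finite_of_card_ne_zero (by omega)
    exact (ENat.card_eq_coe_natCard π.ker).trans (by rw [hker]; rfl)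
  simpa [hker'] using π.twoNumber_le_encard_ker_mul

/-- Chen–Nagano: if the compact connected Lie group `G` is a double cover of `G''`
(via a continuous surjective homomorphism with kernel of order 2), then `#₂G ≤ 2 ⬝ #₂G''`. -/
theorem twoNumber_le_two_mul_of_doubleCover
    {E : Type*} [NormedAddCommGroup E] [NormedSpace ℝ E] [FiniteDimensional ℝ E]
    {H : Type*} [TopologicalSpace H] (I : ModelWithCorners ℝ E H)
    {E'' : Type*} [NormedAddCommGroup E''] [NormedSpace ℝ E''] [FiniteDimensional ℝ E'']
    {H'' : Type*} [TopologicalSpace H''] (I'' : ModelWithCorners ℝ E'' H'')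
    (G : Type*) [Group G] [TopologicalSpace G] [ChartedSpace H G]
    [LieGroup I (⊤ : ℕ∞) G] [CompactSpace G] [ConnectedSpace G]
    (G'' : Type*) [Group G''] [TopologicalSpace G''] [ChartedSpace H'' G'']
    [LieGroup I'' (⊤ : ℕ∞) G''] [CompactSpace G''] [ConnectedSpace G'']
    (π : G →* G'') (hcont : Continuous π) (hsurj : Function.Surjective π)
    (hker : Nat.card π.ker = 2) :
    twoNumber G ≤ 2 * twoNumber G'' :=
  twoNumber_le_two_mul_of_doubleCover_general G G'' π hker
end

section
/- Let G̃ and G be compact connected Lie groups and let φ : G̃ → G be a continuous surjective group homomorphism whose kernel is a finite central subgroup of odd order k (so that φ is a k-fold covering with k odd). Then the 2-numbers satisfy #₂G̃ = #₂G. -/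
/-!
The kernel of `φ` has odd order, so it contains no involution. Hence `φ` is injective on an
antipodal set (points `x`, `y` with the same image give the involution `y * x⁻¹` of the kernel)
and maps it to an antipodal set. Conversely, an antipodal set of `G` may be translated to contain
`1`, and then consists of involutions. Each of them lifts to an involution of `G̃`: if `φ x = b`,
then `x * x` lies in the central kernel, has a square root `w` there because the kernel has odd
order, and `x * w⁻¹` is an involution over `b`. For two such lifts `x`, `y`, the central element
`(x * y) ^ 2` of the kernel is inverted by `x`, hence trivial, so the lifts are antipodal.
-/

namespace Subgroup

variable {G : Type*} [Group G] {K : Subgroup G}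

theorem eq_one_of_mul_self_eq_one_of_odd_natCard (hK : Odd (Nat.card K)) {z : G} (hz : z ∈ K)
    (h : z * z = 1) : z = 1 := by
  have h2 : orderOf z ∣ 2 := orderOf_dvd_of_pow_eq_one (by rw [pow_two, h])
  have hodd : orderOf z ∣ Nat.card K := K.orderOf_dvd_natCard hz
  exact orderOf_eq_one_iff.mp (Nat.eq_one_of_dvd_coprimes (Nat.coprime_two_left.mpr hK) h2 hodd)

theorem exists_mul_self_eq_of_odd_natCard (hK : Odd (Nat.card K)) {c : G} (hc : c ∈ K) :
    ∃ w ∈ K, w * w = c := by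
  obtain ⟨m, hm⟩ := hK
  have hck : c ^ (2 * m + 1) = 1 := by
    rw [← hm]; exact orderOf_dvd_iff_pow_eq_one.mp (K.orderOf_dvd_natCard hc)
  refine ⟨c ^ (m + 1), K.pow_mem hc _, ?_⟩
  rw [← pow_add, show m + 1 + (m + 1) = 2 * m + 1 + 1 by ring, pow_succ, hck, one_mul]

end Subgroup

namespace IsAntipodalSet

variable {G : Type*} [Group G] {A : Set G}

theorem encard_le_twoNumber_s18 (hA : IsAntipodalSet A) : A.encard ≤ twoNumber G :=
  le_iSup₂_of_le A hA le_rfl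

theorem mul_self_eq_one (hA : IsAntipodalSet A) (h1 : 1 ∈ A) {x : G} (hx : x ∈ A) :
    x * x = 1 := by
  simpa using hA x hx 1 h1

theorem image_mul_left (hA : IsAntipodalSet A) (g : G) : IsAntipodalSet ((g * ·) '' A) := by
  rintro _ ⟨x, hx, rfl⟩ _ ⟨y, hy, rfl⟩
  calc g * x * (g * y)⁻¹ * (g * x) = g * (x * y⁻¹ * x) := by group
    _ = g * y := by rw [hA x hx y hy]

theorem image_s18 {H : Type*} [Group H] (hA : IsAntipodalSet A) (φ : G →* H) :
    IsAntipodalSet (φ '' A) := by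
  rintro _ ⟨x, hx, rfl⟩ _ ⟨y, hy, rfl⟩
  rw [← map_inv, ← map_mul, ← map_mul, hA x hx y hy]

theorem injOn_of_odd_natCard_ker {H : Type*} [Group H] (hA : IsAntipodalSet A) (φ : G →* H)
    (hk : Odd (Nat.card φ.ker)) : Set.InjOn φ A := by
  intro x hx y hy hxy
  have hker : y * x⁻¹ ∈ φ.ker := by rw [MonoidHom.mem_ker, map_mul, map_inv, hxy, mul_inv_cancel]
  have hsq : y * x⁻¹ * (y * x⁻¹) = 1 := by
    rw [← mul_assoc, hA y hy x hx, mul_inv_cancel]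
  exact (mul_inv_eq_one.mp (Subgroup.eq_one_of_mul_self_eq_one_of_odd_natCard hk hker hsq)).symm

end IsAntipodalSet

theorem twoNumber_le_of_forall_one_mem {G : Type*} [Group G] {n : ℕ∞}
    (h : ∀ A : Set G, IsAntipodalSet A → 1 ∈ A → A.encard ≤ n) : twoNumber G ≤ n := by
  refine iSup₂_le fun A hA => ?_
  rcases A.eq_empty_or_nonempty with rfl | ⟨a, ha⟩
  · simp
  have := h _ (hA.image_mul_left a⁻¹) ⟨a, ha, inv_mul_cancel a⟩
  rwa [(mul_right_injective a⁻¹).encard_image] at this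

theorem twoNumber_le_twoNumber_of_odd_natCard_ker {Gt G : Type*} [Group Gt] [Group G]
    (φ : Gt →* G) (hk : Odd (Nat.card φ.ker)) : twoNumber Gt ≤ twoNumber G :=
  iSup₂_le fun A hA => by
    rw [← (hA.injOn_of_odd_natCard_ker φ hk).encard_image]
    exact (hA.image_s18 φ).encard_le_twoNumber_s18

namespace MonoidHom

variable {Gt G : Type*} [Group Gt] [Group G] {φ : Gt →* G}

theorem exists_map_eq_and_mul_self_eq_one (hcentral : φ.ker ≤ Subgroup.center Gt)
    (hk : Odd (Nat.card φ.ker)) {x : Gt} (hx : φ (x * x) = 1) :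
    ∃ y, φ y = φ x ∧ y * y = 1 := by
  obtain ⟨w, hw, hwx⟩ := Subgroup.exists_mul_self_eq_of_odd_natCard hk hx
  have hxw : x * w⁻¹ = w⁻¹ * x :=
    Subgroup.mem_center_iff.mp (Subgroup.inv_mem _ (hcentral hw)) x
  refine ⟨x * w⁻¹, by rw [map_mul, map_inv, hw, inv_one, mul_one], ?_⟩
  calc x * w⁻¹ * (x * w⁻¹) = x * x * (w * w)⁻¹ := by
        rw [mul_assoc x, ← mul_assoc w⁻¹, ← hxw, mul_inv_rev]; group
    _ = 1 := by rw [hwx, mul_inv_cancel]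

theorem mul_inv_mul_eq_of_map_mul_inv_mul_eq (hcentral : φ.ker ≤ Subgroup.center Gt)
    (hk : Odd (Nat.card φ.ker)) {x y : Gt} (hx : x * x = 1) (hy : y * y = 1)
    (h : φ x * (φ y)⁻¹ * φ x = φ y) : x * y⁻¹ * x = y := by
  have hyinv : y⁻¹ = y := inv_eq_of_mul_eq_one_right hy
  rw [← map_inv, hyinv] at h
  rw [hyinv]
  set z := x * y * (x * y) with hz
  have hzker : z ∈ φ.ker := by
    rw [MonoidHom.mem_ker, hz, ← mul_assoc, map_mul, map_mul, map_mul, h, ← map_mul, hy, map_one]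
  -- conjugation by the involution `x` inverts `z = (x * y) ^ 2`, but `z` is central
  have hzz : z * z = 1 := by
    have hxx : ∀ t, x * (x * t) = t := fun t => by rw [← mul_assoc, hx, one_mul]
    have hyy : ∀ t, y * (y * t) = t := fun t => by rw [← mul_assoc, hy, one_mul]
    calc z * z = z * (x * z * x) := by
          rw [Subgroup.mem_center_iff.mp (hcentral hzker) x, mul_assoc z, hx, mul_one]
      _ = 1 := by simp only [hz, mul_assoc, hxx, hyy, hx]
  calc x * y * x = z * y := by rw [hz, ← mul_assoc, mul_assoc _ y y, hy, mul_one]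
    _ = y := by rw [Subgroup.eq_one_of_mul_self_eq_one_of_odd_natCard hk hzker hzz, one_mul]

end MonoidHom

theorem IsAntipodalSet.exists_antipodal_image_eq {Gt G : Type*} [Group Gt] [Group G]
    {φ : Gt →* G} (hsurj : Function.Surjective φ) (hcentral : φ.ker ≤ Subgroup.center Gt)
    (hk : Odd (Nat.card φ.ker)) {B : Set G} (hB : IsAntipodalSet B) (h1 : 1 ∈ B) :
    ∃ A : Set Gt, IsAntipodalSet A ∧ φ '' A = B := by
  have hlift : ∀ b : B, ∃ y, φ y = b ∧ y * y = 1 := fun b => by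
    obtain ⟨x, hx⟩ := hsurj b
    rw [← hx]
    exact φ.exists_map_eq_and_mul_self_eq_one hcentral hk
      (by rw [map_mul, hx, hB.mul_self_eq_one h1 b.2])
  choose L hLφ hLsq using hlift
  refine ⟨Set.range L, ?_, ?_⟩
  · rintro _ ⟨b, rfl⟩ _ ⟨c, rfl⟩
    refine φ.mul_inv_mul_eq_of_map_mul_inv_mul_eq hcentral hk (hLsq b) (hLsq c) ?_
    rw [hLφ, hLφ]
    exact hB _ b.2 _ c.2
  · rw [← Set.range_comp, show φ ∘ L = Subtype.val from funext hLφ, Subtype.range_coe]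

theorem twoNumber_le_twoNumber_of_surjective {Gt G : Type*} [Group Gt] [Group G]
    {φ : Gt →* G} (hsurj : Function.Surjective φ) (hcentral : φ.ker ≤ Subgroup.center Gt)
    (hk : Odd (Nat.card φ.ker)) : twoNumber G ≤ twoNumber Gt :=
  twoNumber_le_of_forall_one_mem fun B hB h1 => by
    obtain ⟨A, hA, rfl⟩ := hB.exists_antipodal_image_eq hsurj hcentral hk h1
    rw [(hA.injOn_of_odd_natCard_ker φ hk).encard_image]
    exact hA.encard_le_twoNumber_s18

theorem twoNumber_eq_of_oddCover_general
    (Gt : Type*) [Group Gt]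
    (G : Type*) [Group G]
    (φ : Gt →* G) (hsurj : Function.Surjective φ)
    (hcentral : φ.ker ≤ Subgroup.center Gt)
    (k : ℕ) (hk : Odd k) (hker : Nat.card φ.ker = k) :
    twoNumber Gt = twoNumber G := by
  subst hker
  exact le_antisymm (twoNumber_le_twoNumber_of_odd_natCard_ker φ hk)
    (twoNumber_le_twoNumber_of_surjective hsurj hcentral hk)

/-- Chen–Nagano: if `φ : G̃ → G` is a `k`-fold covering homomorphism of compact connected
Lie groups (continuous, surjective, with finite central kernel of odd order `k`),
then `#₂G̃ = #₂G`. -/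
theorem twoNumber_eq_of_oddCover
    {Et : Type*} [NormedAddCommGroup Et] [NormedSpace ℝ Et] [FiniteDimensional ℝ Et]
    {Ht : Type*} [TopologicalSpace Ht] (It : ModelWithCorners ℝ Et Ht)
    {E : Type*} [NormedAddCommGroup E] [NormedSpace ℝ E] [FiniteDimensional ℝ E]
    {H : Type*} [TopologicalSpace H] (I : ModelWithCorners ℝ E H)
    (Gt : Type*) [Group Gt] [TopologicalSpace Gt] [ChartedSpace Ht Gt]
    [LieGroup It (⊤ : ℕ∞) Gt] [CompactSpace Gt] [ConnectedSpace Gt]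
    (G : Type*) [Group G] [TopologicalSpace G] [ChartedSpace H G]
    [LieGroup I (⊤ : ℕ∞) G] [CompactSpace G] [ConnectedSpace G]
    (φ : Gt →* G) (hcont : Continuous φ) (hsurj : Function.Surjective φ)
    (hcentral : φ.ker ≤ Subgroup.center Gt)
    (k : ℕ) (hk : Odd k) (hker : Nat.card φ.ker = k) :
    twoNumber Gt = twoNumber G :=
  twoNumber_eq_of_oddCover_general Gt G φ hsurj hcentral k hk hker
end
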